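/- For fixed n ≥ 0, Σ_{k=0}^{n} (-1)^k u_r(n,n-k) t^k = Π_{j=0}^{n-1} (1 + (j²+r)t), as an identity of polynomials in t. -/

import Mathlib

/-!
The recurrence for `centralu r` is the one satisfied by the coefficients of
`∏_{i<n} (X - (i² + r))` under multiplication by `X - (n² + r)`, so `centralu r n k` is the
`k`-th coefficient of that product. The sum in question is the reversed polynomial
`∏_{i<n} (1 - (i² + r) X)` evaluated at `-t`.
-/

/-- `centralu r n k` is the r-central factorial number with even indices of the first kind. -/
def centralu (r : ℕ) : ℕ → ℕ → ℤ
  | 0, 0 => 1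
  | 0, _ + 1 => 0
  | n + 1, 0 => (-1) ^ (n + 1) * ∏ i ∈ Finset.range (n + 1), ((i : ℤ) ^ 2 + r)
  | n + 1, k + 1 => centralu r n k - ((n : ℤ) ^ 2 + r) * centralu r n (k + 1)

open Finset Polynomial

theorem centralu_succ_zero (r n : ℕ) :
    centralu r (n + 1) 0 = -((n : ℤ) ^ 2 + r) * centralu r n 0 := by
  cases n <;> simp [centralu, prod_range_succ _ (_ + 1)]; ring

theorem coeff_prod_X_sub_C_centralu {R : Type*} [CommRing R] (r n k : ℕ) :
    (∏ i ∈ range n, (X - C ((i : R) ^ 2 + r))).coeff k = (centralu r n k : R) := by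
  induction n generalizing k with
  | zero => cases k <;> simp [centralu, coeff_one]
  | succ n ih =>
    rw [prod_range_succ]
    cases k with
    | zero =>
      rw [mul_coeff_zero, ih, centralu_succ_zero, coeff_sub, coeff_X_zero, coeff_C_zero]
      push_cast
      ring
    | succ k => simp only [coeff_mul_X_sub_C, ih, centralu]; push_cast; ring

theorem reverse_prod_X_sub_C {R ι : Type*} [CommRing R] [IsDomain R] (s : Finset ι) (a : ι → R) :
    reverse (∏ i ∈ s, (X - C (a i))) = ∏ i ∈ s, (1 - C (a i) * X) := by
  have reverse_one : reverse (1 : R[X]) = 1 := by simpa using reverse_C (1 : R)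
  have reverse_X : reverse (X : R[X]) = 1 := by simpa [reverse_one] using reverse_mul_X (1 : R[X])
  induction s using Finset.cons_induction with
  | empty => simpa using reverse_one
  | cons i s hi ih =>
    rw [prod_cons, prod_cons, reverse_mul_of_domain, ih, sub_eq_add_neg, ← C_neg, reverse_add_C,
      reverse_X, natDegree_X, pow_one, C_neg, neg_mul, ← sub_eq_add_neg]

theorem eval_reverse_eq_sum_range {R : Type*} [CommSemiring R] {p : R[X]} {n : ℕ}
    (hp : p.natDegree = n) (x : R) :
    p.reverse.eval x = ∑ k ∈ range (n + 1), p.coeff (n - k) * x ^ k := by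
  rw [eval_eq_sum_range' (n := n + 1) (by have := reverse_natDegree_le p; omega)]
  refine sum_congr rfl fun k hk => ?_
  rw [coeff_reverse, hp, revAt_le (by simpa [Nat.lt_succ_iff] using hk)]

theorem centralu_gen_fun (r n : ℕ) (t : ℝ) :
    ∑ k ∈ Finset.range (n + 1), (-1 : ℝ) ^ k * (centralu r n (n - k) : ℝ) * t ^ k =
      ∏ j ∈ Finset.range n, (1 + ((j : ℝ) ^ 2 + r) * t) := by
  set P : ℝ[X] := ∏ i ∈ range n, (X - C ((i : ℝ) ^ 2 + r))
  have hP : P.natDegree = n := by rw [natDegree_finsetProd_X_sub_C_eq_card, card_range]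
  calc ∑ k ∈ range (n + 1), (-1 : ℝ) ^ k * (centralu r n (n - k) : ℝ) * t ^ k
      = P.reverse.eval (-t) := by
        rw [eval_reverse_eq_sum_range hP]
        refine sum_congr rfl fun k _ => ?_
        rw [coeff_prod_X_sub_C_centralu, neg_pow]
        ring
    _ = ∏ j ∈ range n, (1 + ((j : ℝ) ^ 2 + r) * t) := by
        rw [reverse_prod_X_sub_C, eval_prod]
        simp
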